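/- Let w = x_{i_1}⋯x_{i_n} be a positive normal form (so i_1 ≤ ⋯ ≤ i_n) and let i ≥ 0. Then the letter x_i skips over w if and only if i_j < i + j - 1 for all j = 1,…,n. Consequently, if x_i skips over w, then x_k skips over w for every k > i. -/

import Mathlib

set_option maxHeartbeats 1000000

noncomputable section

/-- The unit interval `[0,1]` as a type. -/
abbrev I : Type := Set.Icc (0:ℝ) 1

/-- The underlying function of the generator `x₀` of Thompson's group `F`. -/
def x0fun (t : ℝ) : ℝ := if t ≤ 1/4 then 2*t else if t ≤ 1/2 then t + 1/4 else t/2 + 1/2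

/-- The inverse of `x0fun`. -/
def x0inv (t : ℝ) : ℝ := if t ≤ 1/2 then t/2 else if t ≤ 3/4 then t - 1/4 else 2*t - 1

/-- The underlying function of the generator `x₁` of Thompson's group `F`. -/
def x1fun (t : ℝ) : ℝ :=
  if t ≤ 1/2 then t else if t ≤ 5/8 then 2*t - 1/2 else if t ≤ 3/4 then t + 1/8 else t/2 + 1/2

/-- The inverse of `x1fun`. -/
def x1inv (t : ℝ) : ℝ :=
  if t ≤ 1/2 then t else if t ≤ 3/4 then t/2 + 1/4 else if t ≤ 7/8 then t - 1/8 else 2*t - 1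

/-- The generator `x₀` of Thompson's group `F`, as a bijection of `[0,1]`. -/
def x₀ : Equiv.Perm I where
  toFun t := ⟨x0fun t.1, by
    obtain ⟨h0, h1⟩ := Set.mem_Icc.mp t.2
    simp only [Set.mem_Icc, x0fun]
    split_ifs <;> constructor <;> linarith⟩
  invFun t := ⟨x0inv t.1, by
    obtain ⟨h0, h1⟩ := Set.mem_Icc.mp t.2
    simp only [Set.mem_Icc, x0inv]
    split_ifs <;> constructor <;> linarith⟩
  left_inv t := by
    obtain ⟨h0, h1⟩ := Set.mem_Icc.mp t.2
    apply Subtype.ext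
    show x0inv (x0fun t.1) = t.1
    simp only [x0fun, x0inv]
    split_ifs <;> linarith
  right_inv t := by
    obtain ⟨h0, h1⟩ := Set.mem_Icc.mp t.2
    apply Subtype.ext
    show x0fun (x0inv t.1) = t.1
    simp only [x0fun, x0inv]
    split_ifs <;> linarith

/-- The generator `x₁` of Thompson's group `F`, as a bijection of `[0,1]`. -/
def x₁ : Equiv.Perm I where
  toFun t := ⟨x1fun t.1, by
    obtain ⟨h0, h1⟩ := Set.mem_Icc.mp t.2
    simp only [Set.mem_Icc, x1fun]
    split_ifs <;> constructor <;> linarith⟩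
  invFun t := ⟨x1inv t.1, by
    obtain ⟨h0, h1⟩ := Set.mem_Icc.mp t.2
    simp only [Set.mem_Icc, x1inv]
    split_ifs <;> constructor <;> linarith⟩
  left_inv t := by
    obtain ⟨h0, h1⟩ := Set.mem_Icc.mp t.2
    apply Subtype.ext
    show x1inv (x1fun t.1) = t.1
    simp only [x1fun, x1inv]
    split_ifs <;> linarith
  right_inv t := by
    obtain ⟨h0, h1⟩ := Set.mem_Icc.mp t.2
    apply Subtype.ext
    show x1fun (x1inv t.1) = t.1
    simp only [x1fun, x1inv]
    split_ifs <;> linarith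

/-- Composition in Thompson's group `F` is from left to right: the product `f·g` in the paper
is the function `t ↦ g (f t)`.  In Lean, `Equiv.Perm` multiplication is composition from right
to left: `(f * g) t = f (g t)`.  Hence a paper product `a₁ a₂ ⋯ aₙ` corresponds to the Lean
product `aₙ * ⋯ * a₂ * a₁`.

`x i` is the standard generator `x_i` of Thompson's group `F`: here `x_0, x_1` are the explicit
piecewise-linear maps, and for `i ≥ 1`, `x_{i+1} = x_0^{-i} x_1 x_0^{i}` (left-to-right
composition), which in Lean's convention is `x₀ ^ i * x₁ * (x₀ ^ i)⁻¹`. -/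
def x (i : ℕ) : Equiv.Perm I := if i = 0 then x₀ else x₀ ^ (i-1) * x₁ * (x₀ ^ (i-1))⁻¹

/-- Thompson's group `F`, realized as the group of increasing piecewise-linear homeomorphisms of
`[0,1]` with dyadic breakpoints and slopes powers of 2; it is generated by `x_0` and `x_1`. -/
def F : Subgroup (Equiv.Perm I) := Subgroup.closure {x 0, x 1}

/-- The subgroup `G = ⟨x_0x_2, x_1x_2⟩` of `F` (products written left-to-right, so
`x_0x_2` is the Lean element `x 2 * x 0`). -/
def G : Subgroup (Equiv.Perm I) := Subgroup.closure {x 2 * x 0, x 2 * x 1}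

/-- Jones' subgroup `F⃗ = ⟨x_0x_1, x_1x_2, x_2x_3⟩` of `F` (products written left-to-right). -/
def JonesF : Subgroup (Equiv.Perm I) := Subgroup.closure {x 1 * x 0, x 2 * x 1, x 3 * x 2}

lemma x_mem_F (i : ℕ) : x i ∈ F := by
  have h0 : x 0 ∈ F := Subgroup.subset_closure (by simp)
  have h1 : x 1 ∈ F := Subgroup.subset_closure (by simp)
  have hx0 : x₀ ∈ F := by simpa [x] using h0
  have hx1 : x₁ ∈ F := by simpa [x] using h1
  rcases Nat.eq_zero_or_pos i with h | h
  · subst h; exact h0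
  · have : x i = x₀ ^ (i-1) * x₁ * (x₀ ^ (i-1))⁻¹ := by
      simp [x, Nat.pos_iff_ne_zero.mp h]
    rw [this]
    exact mul_mem (mul_mem (pow_mem hx0 _) hx1) (inv_mem (pow_mem hx0 _))

lemma y0_mem_G : x 2 * x 0 ∈ G := Subgroup.subset_closure (by simp)

lemma y1_mem_G : x 2 * x 1 ∈ G := Subgroup.subset_closure (by simp)

/-- The length `|w|` of an element of `F`: the minimal `n` such that `w` is a product of `n`
elements of `{x_i^{±1} : i ≥ 0}`.  This equals the length of the normal form of `w`. -/
def len (w : Equiv.Perm I) : ℕ :=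
  sInf {n | ∃ l : List (Equiv.Perm I), l.length = n ∧
    (∀ a ∈ l, ∃ i : ℕ, a = x i ∨ a = (x i)⁻¹) ∧ l.prod = w}

/-- The element of `F` given by the positive word `x_{i_1} x_{i_2} ⋯ x_{i_n}` (composition from
left to right), where `l = [i_1, i_2, …, i_n]`.  Since Lean's multiplication of permutations is
composition from right to left, this is the Lean product of the reversed list of letters. -/
def pp (l : List ℕ) : Equiv.Perm I := ((l.map x).reverse).prod

/-- `l = [i_1, …, i_n]` encodes a *block*: a positive normal form `x_{i_1}⋯x_{i_n}`
(so `i_1 ≤ ⋯ ≤ i_n`) with `i_1 ≠ i_n` and `i_j < i_1 + j` for all `j = 1, …, n`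
(here with 0-based indexing: `l[k] < l[0] + k + 1`). -/
def IsBlock (l : List ℕ) : Prop :=
  l ≠ [] ∧ l.Pairwise (· ≤ ·) ∧ l.headI ≠ l.getLastD 0 ∧
    ∀ k < l.length, l.getD k 0 < l.headI + k + 1

/-- The double coset `F⃗ a F⃗` of Jones' subgroup.  (As a set this does not depend on the
composition convention, since `u, v` range over all of `F⃗`.) -/
def dCoset (a : Equiv.Perm I) : Set (Equiv.Perm I) :=
  {w | ∃ u ∈ JonesF, ∃ v ∈ JonesF, w = v * a * u}

/-- A real number is dyadic if it has the form `a / 2^n` with `a, n` natural numbers. -/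
def IsDyadic (α : ℝ) : Prop := ∃ (a : ℕ) (n : ℕ), α = a / 2^n

/-- The subgroup of all permutations fixing every point of `U`. -/
def fixing (U : Set ℝ) : Subgroup (Equiv.Perm I) where
  carrier := {g | ∀ t : I, (t : ℝ) ∈ U → g t = t}
  one_mem' := fun _ _ => rfl
  mul_mem' := by
    intro a b ha hb t ht
    simp only [Equiv.Perm.mul_apply]
    rw [hb t ht, ha t ht]
  inv_mem' := by
    intro a ha t ht
    conv_lhs => rw [← ha t ht]
    exact Equiv.symm_apply_apply a t

/-- `H_U`: the stabilizer in `F` of the finite set `U ⊂ (0,1)`, i.e. the subgroup of all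
elements of `F` fixing every point of `U`. -/
def HU (U : Set ℝ) : Subgroup (Equiv.Perm I) := F ⊓ fixing U


/-!
The generator `x m` is supported on `[1 - 2⁻ᵐ, 1]` and has slope `2` just to the right of
`1 - 2⁻ᵐ`. The relations `x_b x_a = x_a x_{b+1}` (`a < b`) let `x_i` pass a first letter
`x_a` with `a < i` at the cost of raising its index by one; this gives sufficiency, and reduces
necessity to words all of whose letters are `≥ i`. For such a word `w`, compare `x_i w` and
`w x_{i+n}` just to the right of `1 - 2⁻ⁱ`: there `x_{i+n}` is the identity, `x_i` doubles the
distance to `1 - 2⁻ⁱ`, and `w` multiplies it by a fixed power of `2`.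
-/

def edge (m : ℕ) : ℝ := 1 - (1/2)^m

lemma edge_nonneg (m : ℕ) : 0 ≤ edge m := by
  have : (1/2 : ℝ)^m ≤ 1 := pow_le_one₀ (by norm_num) (by norm_num)
  unfold edge; linarith

lemma edge_le_one (m : ℕ) : edge m ≤ 1 := by
  have : (0 : ℝ) ≤ (1/2)^m := by positivity
  unfold edge; linarith

lemma edge_mono : Monotone edge := fun m n h => by
  have : (1/2 : ℝ)^n ≤ (1/2)^m := pow_le_pow_of_le_one (by norm_num) (by norm_num) h
  unfold edge; linarith

lemma edge_succ (m : ℕ) : edge (m + 1) = edge m + (1/2)^(m+1) := by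
  unfold edge; ring

lemma half_le_edge {m : ℕ} (hm : 1 ≤ m) : 1/2 ≤ edge m :=
  (by norm_num [edge] : edge 1 = 1/2) ▸ edge_mono hm

lemma x_zero : x 0 = x₀ := by simp [x]

lemma x_one : x 1 = x₁ := by simp [x]

lemma x_succ {m : ℕ} (hm : m ≠ 0) : x (m + 1) = x₀ * x m * x₀⁻¹ := by
  obtain ⟨m, rfl⟩ := Nat.exists_eq_add_one_of_ne_zero hm
  simp only [x, Nat.add_one_ne_zero, if_false, Nat.add_sub_cancel, pow_succ']
  group

lemma x_apply_of_le_edge {m : ℕ} (hm : 1 ≤ m) {t : I} (ht : t.1 ≤ edge m) : x m t = t := by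
  induction m, hm using Nat.le_induction generalizing t with
  | base =>
    rw [x_one]
    apply Subtype.ext
    change x1fun t.1 = t.1
    simp only [edge, pow_one] at ht
    simp only [x1fun]
    split_ifs <;> linarith
  | succ m hm ih =>
    have hpow : (1/2 : ℝ)^(m+1) = (1/2)^m / 2 := by ring
    have hm2 : 1/2 ≤ edge m := half_le_edge hm
    have hinv : (x₀⁻¹ t).1 ≤ edge m := by
      change x0inv t.1 ≤ edge m
      simp only [edge] at ht hm2 ⊢
      simp only [x0inv]
      split_ifs <;> linarith
    rw [x_succ (by omega), Equiv.Perm.mul_apply, Equiv.Perm.mul_apply, ih hinv]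
    exact x₀.apply_symm_apply t

lemma x_apply_near_edge (m : ℕ) {t : I} {s : ℝ} (hs₀ : 0 ≤ s) (hs : s ≤ (1/2)^(m+2))
    (ht : t.1 = edge m + s) : (x m t).1 = edge m + 2 * s := by
  rcases Nat.eq_zero_or_pos m with rfl | hm
  · rw [x_zero]
    change x0fun t.1 = _
    norm_num [edge] at hs ht ⊢
    simp only [x0fun, ht]
    split_ifs <;> linarith
  induction m, hm using Nat.le_induction generalizing t s with
  | base =>
    rw [x_one]
    change x1fun t.1 = _
    norm_num [edge] at hs ht ⊢
    simp only [x1fun, ht]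
    split_ifs <;> linarith
  | succ m hm ih =>
    have hedge : edge (m + 1) = edge m / 2 + 1/2 := by unfold edge; ring
    have hpow : (1/2 : ℝ)^(m+1+2) = (1/2)^(m+2) / 2 := by ring
    have hm2 : 1/2 ≤ edge m := half_le_edge hm
    have hinv : (x₀⁻¹ t).1 = edge m + 2 * s := by
      change x0inv t.1 = _
      simp only [x0inv, ht, hedge]
      split_ifs <;> linarith
    have hmid := ih (by linarith) (by linarith) hinv
    rw [x_succ (by omega), Equiv.Perm.mul_apply, Equiv.Perm.mul_apply]
    change x0fun (x m (x₀⁻¹ t)).1 = _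
    rw [hmid, hedge]
    simp only [x0fun]
    split_ifs <;> linarith

lemma x_one_conj {d : ℕ} (hd : 2 ≤ d) : x 1 * x d * (x 1)⁻¹ = x (d + 1) := by
  -- `x₁` and `x₀` agree on `[3/4, 1]`, which contains the support of `x d`.
  have hdisj : (x₀⁻¹ * x₁).Disjoint (x d) := fun t => by
    rcases le_total (3/4 : ℝ) t.1 with ht | ht
    · left
      apply Subtype.ext
      change x0inv (x1fun t.1) = t.1
      have := t.2.2
      simp only [x0inv, x1fun]
      split_ifs <;> linarith
    · right
      have h34 : (3/4 : ℝ) ≤ edge d := (by norm_num [edge] : edge 2 = 3/4) ▸ edge_mono hd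
      exact x_apply_of_le_edge (by omega) (ht.trans h34)
  calc x 1 * x d * (x 1)⁻¹ = x₀ * ((x₀⁻¹ * x₁) * x d) * x₁⁻¹ := by
        rw [x_one]; group
    _ = x₀ * (x d * (x₀⁻¹ * x₁)) * x₁⁻¹ := by rw [hdisj.commute.eq]
    _ = x (d + 1) := by rw [x_succ (by omega)]; group

lemma x_conj_of_lt {a b : ℕ} (hab : a < b) : x a * x b * (x a)⁻¹ = x (b + 1) := by
  induction a generalizing b with
  | zero => rw [x_zero, x_succ (by omega)]
  | succ a ih =>
    rcases Nat.eq_zero_or_pos a with rfl | ha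
    · exact x_one_conj hab
    obtain ⟨b, rfl⟩ := Nat.exists_eq_add_one_of_ne_zero (by omega : b ≠ 0)
    calc x (a + 1) * x (b + 1) * (x (a + 1))⁻¹
          = x₀ * (x a * x b * (x a)⁻¹) * x₀⁻¹ := by
          rw [x_succ (by omega), x_succ (by omega)]; group
      _ = x (b + 1 + 1) := by rw [ih (by omega), ← x_succ (by omega)]

lemma pp_cons (a : ℕ) (l : List ℕ) : pp (a :: l) = pp l * x a := by
  simp [pp]

def SkipsOver (i : ℕ) (l : List ℕ) : Prop := pp l * x i = x (i + l.length) * pp l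

lemma skipsOver_nil (i : ℕ) : SkipsOver i [] := by
  simp [SkipsOver, pp]

lemma skipsOver_cons_iff {a i : ℕ} (h : a < i) (l : List ℕ) :
    SkipsOver i (a :: l) ↔ SkipsOver (i + 1) l := by
  have hpass : x a * x i = x (i + 1) * x a := by
    rw [← x_conj_of_lt h]; group
  have hlen : i + (a :: l).length = i + 1 + l.length := by simp; omega
  rw [SkipsOver, SkipsOver, pp_cons, hlen, mul_assoc, hpass, ← mul_assoc, ← mul_assoc,
    mul_left_inj]

lemma pp_apply_near_edge {j : ℕ} {l : List ℕ} (hl : ∀ m ∈ l, j ≤ m) {t : I} {s : ℝ}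
    (hs₀ : 0 ≤ s) (hs : 2^l.length * s ≤ (1/2)^(j+2)) (ht : t.1 = edge j + s) :
    (pp l t).1 = edge j + 2^(l.count j) * s := by
  induction l generalizing t s with
  | nil => simpa [pp] using ht
  | cons a l ih =>
    have hl' : ∀ m ∈ l, j ≤ m := fun m hm => hl m (List.mem_cons_of_mem a hm)
    rw [List.length_cons, pow_succ] at hs
    have hls : s ≤ 2^l.length * s := le_mul_of_one_le_left hs₀ (one_le_pow₀ (by norm_num))
    rw [pp_cons, Equiv.Perm.mul_apply]
    obtain rfl | hlt := (hl a List.mem_cons_self).eq_or_lt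
    · rw [ih hl' (by linarith) (by linarith) (x_apply_near_edge j hs₀ (by linarith) ht),
        List.count_cons_self, pow_succ]
      ring
    · have hfix : x a t = t := by
        refine x_apply_of_le_edge (by omega) (le_trans ?_ (edge_mono hlt))
        rw [ht, edge_succ]
        have : (1/2 : ℝ)^(j+2) ≤ (1/2)^(j+1) :=
          pow_le_pow_of_le_one (by norm_num) (by norm_num) (by omega)
        linarith
      rw [hfix, ih hl' hs₀ (by linarith) ht, List.count_cons_of_ne hlt.ne']

lemma not_skipsOver_of_forall_le {i : ℕ} {l : List ℕ} (hne : l ≠ [])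
    (hl : ∀ m ∈ l, i ≤ m) : ¬ SkipsOver i l := by
  intro h
  rw [SkipsOver] at h
  set n := l.length
  set c := l.count i
  have hn : 1 ≤ n := List.length_pos_iff.mpr hne
  obtain ⟨δ, hδ, hδn⟩ : ∃ δ : ℝ, 0 < δ ∧ 2^(n+1) * δ = (1/2)^(i+2) :=
    ⟨(1/2)^(i+2) / 2^(n+1), by positivity, by field_simp⟩
  have hpow : (1/2 : ℝ)^(i+2) = (1/2)^(i+1) / 2 := by ring
  have hnδ : 2^n * δ = (1/2)^(i+2) / 2 := by rw [← hδn, pow_succ]; ring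
  have hδ₁ : δ ≤ 2^n * δ := le_mul_of_one_le_left hδ.le (one_le_pow₀ (by norm_num))
  have hcδ : 2^c * δ ≤ 2^n * δ :=
    mul_le_mul_of_nonneg_right (pow_le_pow_right₀ (by norm_num) List.count_le_length) hδ.le
  have hδi : edge i + δ ≤ edge (i + 1) := by rw [edge_succ]; linarith
  let t₀ : I := ⟨edge i + δ, by linarith [edge_nonneg i], hδi.trans (edge_le_one _)⟩
  have hx : (x i t₀).1 = edge i + 2 * δ := x_apply_near_edge i hδ.le (by linarith) rfl
  have hlhs : (pp l (x i t₀)).1 = edge i + 2^c * (2 * δ) :=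
    pp_apply_near_edge hl (by linarith) (by linarith) hx
  have hmid : (pp l t₀).1 = edge i + 2^c * δ := pp_apply_near_edge hl hδ.le (by linarith) rfl
  have hrhs : x (i + n) (pp l t₀) = pp l t₀ := by
    refine x_apply_of_le_edge (by omega) (le_trans ?_ (edge_mono (by omega : i + 1 ≤ i + n)))
    rw [hmid, edge_succ]
    linarith
  have heval := congrArg (fun g : Equiv.Perm I => (g t₀).1) h
  simp only [Equiv.Perm.mul_apply, hrhs, hlhs, hmid] at heval
  have : (0 : ℝ) < 2^c * δ := by positivity
  linarith

lemma forall_getD_cons_lt_iff (a i : ℕ) (l : List ℕ) :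
    (∀ k < (a :: l).length, (a :: l).getD k 0 < i + k) ↔
      a < i ∧ ∀ k < l.length, l.getD k 0 < i + 1 + k := by
  simp only [List.length_cons, Nat.forall_lt_succ_left, List.getD_cons_zero, List.getD_cons_succ,
    add_zero]
  simp only [add_assoc, add_comm 1]

lemma skipsOver_iff {l : List ℕ} (hl : l.Pairwise (· ≤ ·)) (i : ℕ) :
    SkipsOver i l ↔ ∀ k < l.length, l.getD k 0 < i + k := by
  induction l generalizing i with
  | nil => simp [skipsOver_nil]
  | cons a l ih =>
    rw [forall_getD_cons_lt_iff]
    by_cases hai : a < i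
    · rw [skipsOver_cons_iff hai, ih hl.of_cons]
      exact (and_iff_right hai).symm
    · refine iff_of_false (not_skipsOver_of_forall_le (List.cons_ne_nil a l) ?_) (by tauto)
      intro m hm
      rcases List.mem_cons.mp hm with rfl | hm
      · omega
      · exact (Nat.le_of_not_lt hai).trans (List.rel_of_pairwise_cons hl hm)

/-- Let `w = x_{i_1}⋯x_{i_n}` be a positive normal form (`i_1 ≤ ⋯ ≤ i_n`,
encoded by the list `l = [i_1, …, i_n]`) and let `i ≥ 0`.  Then `x_i` skips over `w`
(i.e. `x_i w = w x_{i+n}` in `F`; in Lean's right-to-left convention, `pp l * x i =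
x (i + n) * pp l`) if and only if `i_j < i + j - 1` for all `j = 1, …, n` (with 0-based
indexing: `l[k] < i + k` for all `k < n`).  Consequently, if `x_i` skips over `w` then so does
`x_k` for every `k > i`. -/
theorem stmt5 (l : List ℕ) (hl : l.Pairwise (· ≤ ·)) (i : ℕ) :
    (pp l * x i = x (i + l.length) * pp l ↔ ∀ k < l.length, l.getD k 0 < i + k) ∧
    (pp l * x i = x (i + l.length) * pp l →
      ∀ k, i < k → pp l * x k = x (k + l.length) * pp l) := by
  refine ⟨skipsOver_iff hl i, fun h k hik => (skipsOver_iff hl k).2 fun m hm => ?_⟩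
  have := (skipsOver_iff hl i).1 h m hm
  omega
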